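/- Let D be a complete, cocomplete, extremally co-well-powered, (extremal epi, mono) category. Then KD is an (extremal epi, mono) category. -/

import Mathlib

open CategoryTheory CategoryTheory.Limits

universe w v u v₂ u₂

namespace FilteredCats

variable {D : Type u} [Category.{v} D]

/-- The class of morphisms of `D` with source `X`. -/
def MorFrom (X : D) : Type (max u v) := Σ Y : D, X ⟶ Y

/-- `Dom δ₁ δ₂` means `δ₁ ≥ δ₂`: there is `h` with `h ∘ δ₁ = δ₂`. -/
def Dom {X : D} (δ₁ δ₂ : MorFrom X) : Prop :=
  ∃ h : δ₁.1 ⟶ δ₂.1, δ₁.2 ≫ h = δ₂.2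

/-- A projective filtration on `X`: a nonempty, directed, saturated class of
morphisms with source `X`. -/
structure ProjFilt (X : D) where
  carrier : Set (MorFrom X)
  nonempty' : carrier.Nonempty
  directed' : ∀ δ₁ ∈ carrier, ∀ δ₂ ∈ carrier, ∃ δ ∈ carrier, Dom δ δ₁ ∧ Dom δ δ₂
  saturated' : ∀ δ₁ ∈ carrier, ∀ δ₂, Dom δ₁ δ₂ → δ₂ ∈ carrier

/-- The pull back of a set of morphisms with source `X` along `f : X' ⟶ X`. -/
def pullSet {X' X : D} (f : X' ⟶ X) (S : Set (MorFrom X)) : Set (MorFrom X') :=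
  {δ' | ∃ δ ∈ S, δ' = ⟨δ.1, f ≫ δ.2⟩}

/-- The pull back of a projective filtration along `f : X' ⟶ X`. -/
def ProjFilt.pull {X' X : D} (f : X' ⟶ X) (P : ProjFilt X) : ProjFilt X' where
  carrier := pullSet f P.carrier
  nonempty' := by
    obtain ⟨δ, hδ⟩ := P.nonempty'
    exact ⟨⟨δ.1, f ≫ δ.2⟩, δ, hδ, rfl⟩
  directed' := by
    rintro _ ⟨δ₁, h₁, rfl⟩ _ ⟨δ₂, h₂, rfl⟩
    obtain ⟨δ, hδ, ⟨g₁, hg₁⟩, ⟨g₂, hg₂⟩⟩ := P.directed' δ₁ h₁ δ₂ h₂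
    exact ⟨⟨δ.1, f ≫ δ.2⟩, ⟨δ, hδ, rfl⟩,
      ⟨g₁, by simp [hg₁]⟩, ⟨g₂, by simp [hg₂]⟩⟩
  saturated' := by
    rintro _ ⟨δ, hδ, rfl⟩ δ₂ ⟨h, hh⟩
    refine ⟨⟨δ₂.1, δ.2 ≫ h⟩, P.saturated' δ hδ _ ⟨h, rfl⟩, ?_⟩
    obtain ⟨Y₂, g₂⟩ := δ₂
    have hg : g₂ = f ≫ (δ.2 ≫ h) := by simpa using hh.symm
    exact Sigma.ext rfl (heq_of_eq hg)

/-- A projectively filtered object of `D`. -/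
structure PObj (D : Type u) [Category.{v} D] where
  base : D
  filt : ProjFilt base

/-- A morphism of projectively filtered objects: a morphism of the underlying
objects such that the pull back of the target filtration is contained in the
source filtration. -/
structure PHom (A B : PObj D) : Type v where
  toHom : A.base ⟶ B.base
  mem : ∀ δ ∈ B.filt.carrier, (⟨δ.1, toHom ≫ δ.2⟩ : MorFrom A.base) ∈ A.filt.carrier

theorem PHom.ext' {A B : PObj D} {f g : PHom A B} (h : f.toHom = g.toHom) : f = g := by
  cases f; cases g; cases h; rfl

instance : Category.{v} (PObj D) where
  Hom := PHom
  id A := ⟨𝟙 A.base, fun δ hδ => by rw [Category.id_comp]; exact hδ⟩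
  comp {A B C} f g := ⟨f.toHom ≫ g.toHom, fun δ hδ => by
    have h1 := g.mem δ hδ
    have h2 := f.mem _ h1
    simpa using h2⟩
  id_comp f := PHom.ext' (Category.id_comp _)
  comp_id f := PHom.ext' (Category.comp_id _)
  assoc f g h := PHom.ext' (Category.assoc _ _ _)

@[simp] theorem PObj.id_toHom (A : PObj D) : PHom.toHom (𝟙 A) = 𝟙 A.base := rfl
@[simp] theorem PObj.comp_toHom {A B C : PObj D} (f : A ⟶ B) (g : B ⟶ C) :
    PHom.toHom (f ≫ g) = PHom.toHom f ≫ PHom.toHom g := rfl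

/-- The forgetful functor `PD → D`. -/
def Pforget (D : Type u) [Category.{v} D] : PObj D ⥤ D where
  obj A := A.base
  map f := PHom.toHom f

/-- The discrete filtration functor `D → PD`, `X ↦ (X, M(X))`. -/
def Pdiscrete (D : Type u) [Category.{v} D] : D ⥤ PObj D where
  obj X :=
    { base := X
      filt :=
        { carrier := Set.univ
          nonempty' := ⟨⟨X, 𝟙 X⟩, trivial⟩
          directed' := fun δ₁ _ δ₂ _ =>
            ⟨⟨X, 𝟙 X⟩, trivial, ⟨δ₁.2, Category.id_comp _⟩, ⟨δ₂.2, Category.id_comp _⟩⟩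
          saturated' := fun _ _ _ _ => trivial } }
  map f := ⟨f, fun _ _ => trivial⟩

/-- The functor `PD → PE` induced by a functor `G : D → E`. -/
def Pfunctor {E : Type u₂} [Category.{v₂} E] (G : D ⥤ E) : PObj D ⥤ PObj E where
  obj A :=
    { base := G.obj A.base
      filt :=
        { carrier := {δ' | ∃ δ ∈ A.filt.carrier,
            Dom (⟨G.obj δ.1, G.map δ.2⟩ : MorFrom (G.obj A.base)) δ'}
          nonempty' := by
            obtain ⟨δ, hδ⟩ := A.filt.nonempty'
            exact ⟨⟨G.obj δ.1, G.map δ.2⟩, δ, hδ, ⟨𝟙 _, Category.comp_id _⟩⟩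
          directed' := by
            rintro δ'₁ ⟨δ₁, h₁, g₁, hg₁⟩ δ'₂ ⟨δ₂, h₂, g₂, hg₂⟩
            obtain ⟨δ, hδ, ⟨k₁, hk₁⟩, ⟨k₂, hk₂⟩⟩ := A.filt.directed' δ₁ h₁ δ₂ h₂
            refine ⟨⟨G.obj δ.1, G.map δ.2⟩, ⟨δ, hδ, ⟨𝟙 _, Category.comp_id _⟩⟩,
              ⟨G.map k₁ ≫ g₁, ?_⟩, ⟨G.map k₂ ≫ g₂, ?_⟩⟩
            · rw [← Category.assoc, ← G.map_comp, hk₁, hg₁]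
            · rw [← Category.assoc, ← G.map_comp, hk₂, hg₂]
          saturated' := by
            rintro δ'₁ ⟨δ, hδ, g, hg⟩ δ'₂ ⟨h, hh⟩
            exact ⟨δ, hδ, ⟨g ≫ h, by rw [← Category.assoc, hg, hh]⟩⟩ } }
  map {A B} f :=
    ⟨G.map (PHom.toHom f), by
      rintro δ' ⟨δ, hδ, g, hg⟩
      exact ⟨⟨δ.1, PHom.toHom f ≫ δ.2⟩, f.mem δ hδ,
        ⟨g, by rw [← hg, ← Category.assoc, ← G.map_comp]⟩⟩⟩
  map_id A := PHom.ext' (G.map_id _)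
  map_comp f g := PHom.ext' (G.map_comp _ _)

/-- An extremal epimorphism: an epimorphism such that in any factorisation
through a monomorphism, the monomorphism is an isomorphism. -/
def ExtremalEpi {C : Type u₂} [Category.{v₂} C] {X Y : C} (e : X ⟶ Y) : Prop :=
  Epi e ∧ ∀ ⦃Z : C⦄ (g : X ⟶ Z) (m : Z ⟶ Y), Mono m → g ≫ m = e → IsIso m

/-- An (extremal epi, mono) category: every morphism factors as an extremal
epimorphism followed by a monomorphism and such factorisations have the
diagonal fill-in property. -/
structure EMCat (C : Type u₂) [Category.{v₂} C] : Prop where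
  fact : ∀ {X Y : C} (f : X ⟶ Y), ∃ (Z : C) (e : X ⟶ Z) (m : Z ⟶ Y),
    ExtremalEpi e ∧ Mono m ∧ e ≫ m = f
  diag : ∀ {A B Z X : C} (e : A ⟶ B) (m : Z ⟶ X) (g : A ⟶ Z) (h : B ⟶ X),
    ExtremalEpi e → Mono m → g ≫ m = e ≫ h → ∃ d : B ⟶ Z, e ≫ d = g ∧ d ≫ m = h

/-- A projective filtration is reduced if it has an initial subclass of
extremal epimorphisms. -/
def ProjFilt.Reduced {X : D} (P : ProjFilt X) : Prop :=
  ∀ δ ∈ P.carrier, ∃ ε ∈ P.carrier, ExtremalEpi ε.2 ∧ Dom ε δ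

/-- The category of reduced projectively filtered objects of `D`. -/
def QObj (D : Type u) [Category.{v} D] := ObjectProperty.FullSubcategory (fun A : PObj D => A.filt.Reduced)

instance : Category.{v} (QObj D) := ObjectProperty.FullSubcategory.category _

/-- The inclusion functor `QD → PD`. -/
def qpInclusion (D : Type u) [Category.{v} D] : QObj D ⥤ PObj D :=
  ObjectProperty.ι _

/-- A category is extremally co-well-powered if every object has, up to
isomorphism, only a (small) set of extremal epimorphisms out of it. -/
def ECWP (C : Type u₂) [Category.{v₂} C] : Prop :=
  ∀ X : C, ∃ (ι : Type v₂) (Y : ι → C) (e : ∀ i, X ⟶ Y i),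
    (∀ i, ExtremalEpi (e i)) ∧
    ∀ ⦃Z : C⦄ (f : X ⟶ Z), ExtremalEpi f → ∃ (i : ι) (φ : Y i ≅ Z), e i ≫ φ.hom = f

/-- The category `(P, D)` associated to a projective filtration: objects are the
elements of `P`, morphisms `δ₁ → δ₂` are morphisms `g` of `D` with `g ∘ δ₁ = δ₂`. -/
def FiltCat {X : D} (P : ProjFilt X) : Type (max u v) := {δ : MorFrom X // δ ∈ P.carrier}

instance {X : D} (P : ProjFilt X) : Category.{v} (FiltCat P) where
  Hom δ₁ δ₂ := {g : δ₁.1.1 ⟶ δ₂.1.1 // δ₁.1.2 ≫ g = δ₂.1.2}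
  id δ := ⟨𝟙 _, Category.comp_id _⟩
  comp f g := ⟨f.1 ≫ g.1, by rw [← Category.assoc, f.2, g.2]⟩
  id_comp f := Subtype.ext (Category.id_comp _)
  comp_id f := Subtype.ext (Category.comp_id _)
  assoc f g h := Subtype.ext (Category.assoc _ _ _)

/-- The functor `(P, D) → D` sending an element of the filtration to its target. -/
def FiltDiagram {X : D} (P : ProjFilt X) : FiltCat P ⥤ D where
  obj δ := δ.1.1
  map g := g.1

/-- The canonical cone on the diagram of a projective filtration, with apex the
underlying object. -/
def filtCone {X : D} (P : ProjFilt X) : Limits.Cone (FiltDiagram P) where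
  pt := X
  π :=
    { app := fun δ => δ.1.2
      naturality := fun δ₁ δ₂ g => by
        have := g.2
        dsimp [FiltDiagram] at *
        simp [this] }

/-- A reduced projective filtration is an iso-filtration if the canonical cone
on its diagram is a limit cone, i.e. the limit exists and the canonical morphism
from the underlying object to it is an isomorphism. -/
def IsoFilt {X : D} (P : ProjFilt X) : Prop :=
  Nonempty (Limits.IsLimit (filtCone P))

/-- The category of iso-filtered objects of `D`. -/
def KObj (D : Type u) [Category.{v} D] :=
  ObjectProperty.FullSubcategory (fun A : QObj D => IsoFilt A.obj.filt)

instance : Category.{v} (KObj D) := ObjectProperty.FullSubcategory.category _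

/-- The inclusion functor `KD → QD`. -/
def kqInclusion (D : Type u) [Category.{v} D] : KObj D ⥤ QObj D :=
  ObjectProperty.ι _

/-- The forgetful functor `KD → D`. -/
def Kforget (D : Type u) [Category.{v} D] : KObj D ⥤ D :=
  kqInclusion D ⋙ qpInclusion D ⋙ Pforget D

/-- The smallest projective filtration containing a class of morphisms
(as a class). -/
def genSet {X : D} (S : Set (MorFrom X)) : Set (MorFrom X) :=
  {δ | ∀ P : ProjFilt X, S ⊆ P.carrier → δ ∈ P.carrier}

/-- The reduction of a class of morphisms: the saturation of the class of
extremal epimorphism parts of (extremal epi, mono)-factorisations of its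
elements. -/
def redSet {X : D} (S : Set (MorFrom X)) : Set (MorFrom X) :=
  {δ | ∃ ε : MorFrom X, ExtremalEpi ε.2 ∧
    (∃ δ' ∈ S, ∃ m : ε.1 ⟶ δ'.1, Mono m ∧ ε.2 ≫ m = δ'.2) ∧ Dom ε δ}

/-- The push forward of a filtration class along `f` (single morphism case). -/
def pushSet {X Y : D} (f : X ⟶ Y) (S : Set (MorFrom X)) : Set (MorFrom Y) :=
  {g | (⟨g.1, f ≫ g.2⟩ : MorFrom X) ∈ S}

/-- The discrete filtration on an object, as an iso-filtered object. -/
def kDiscreteObj (X : D) : KObj D where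
  obj :=
    { obj := (Pdiscrete D).obj X
      property := fun δ _ => ⟨⟨X, 𝟙 X⟩, trivial,
        ⟨(inferInstance : Epi (𝟙 X)), fun _ g m hm hgm => by
          haveI : IsSplitEpi m := ⟨⟨⟨g, hgm⟩⟩⟩
          exact isIso_of_mono_of_isSplitEpi m⟩,
        ⟨δ.2, Category.id_comp _⟩⟩ }
  property := ⟨{
    lift := fun c => c.π.app ⟨⟨X, 𝟙 X⟩, trivial⟩
    fac := fun c j => by
      have h := c.π.naturality (X := ⟨⟨X, 𝟙 X⟩, trivial⟩) (Y := j)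
        ⟨j.1.2, Category.id_comp _⟩
      dsimp [FiltDiagram, filtCone] at h ⊢
      exact h.symm.trans (Category.id_comp _)
    uniq := fun c m hm => by
      have h := hm ⟨⟨X, 𝟙 X⟩, trivial⟩
      rw [← Category.comp_id m]
      exact h }⟩

/-- The discrete filtration functor `D → KD`. -/
def kDiscrete (D : Type u) [Category.{v} D] : D ⥤ KObj D where
  obj X := kDiscreteObj X
  map f := ⟨f, fun _ _ => trivial⟩
  map_id _ := rfl
  map_comp _ _ := rfl

/-- The morphism in `KD` from an iso-filtered object to the discrete object on
the target of an element of its filtration. -/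
def kToDiscrete {A : KObj D} (δ : MorFrom A.obj.obj.base)
    (hδ : δ ∈ A.obj.obj.filt.carrier) : A ⟶ kDiscreteObj δ.1 :=
  ⟨⟨show PHom A.obj.obj ((kDiscreteObj δ.1).obj.obj) from
    ⟨δ.2, fun γ _ => A.obj.obj.filt.saturated' δ hδ _ ⟨γ.2, rfl⟩⟩⟩⟩

/-- The natural transformation `P(G) → P(H)` induced by `ν : G → H`. -/
def Pnat {E : Type u₂} [Category.{v₂} E] {G H : D ⥤ E} (ν : G ⟶ H) :
    Pfunctor G ⟶ Pfunctor H where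
  app A :=
    ⟨ν.app A.base, by
      rintro δ' ⟨δ, hδ, g, hg⟩
      exact ⟨δ, hδ, ⟨ν.app δ.1 ≫ g, by
        rw [← Category.assoc, ν.naturality, Category.assoc, hg] <;> rfl⟩⟩⟩
  naturality {A B} f := PHom.ext' (ν.naturality (PHom.toHom f))

/-!
Limits in `KD` are computed in `D`, with the reduced filtration generated by the pulled-back
filtrations of the factors. Colimits are computed in `D` with the glued filtration and then
reflected into `KD`: the reflection of a reduced filtered object `(X, P)` is the limit of the
targets of a small initial family of elements of `P`, which exists because `D` is extremally
co-well-powered. An extremal quotient `B` of `A` in `KD` is recovered, up to isomorphism, as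
the limit of the small quotients of `A` factoring through it, so `KD` is again extremally
co-well-powered. Finally, in any extremally co-well-powered category with pullbacks, wide
pushouts and coequalizers, the image of `f` is the wide pushout of all extremal quotients
through which `f` factors.
-/

theorem IsLimit.isIso_lift {J : Type*} [Category J] {C : Type*} [Category C] {F : J ⥤ C}
    {s t : Cone F} (hs : IsLimit s) (ht : IsLimit t) : IsIso (hs.lift t) :=
  have := IsLimit.hom_isIso ht hs (hs.liftConeMorphism t)
  (Cone.forget F).map_isIso (hs.liftConeMorphism t)

section ExtremalEpis

variable {C : Type u₂} [Category.{v₂} C]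

theorem extremalEpi_iff {X Y : C} (f : X ⟶ Y) : ExtremalEpi f ↔ CategoryTheory.ExtremalEpi f :=
  ⟨fun ⟨hepi, hiso⟩ => { toEpi := hepi, isIso := fun p i fac _ => hiso p i inferInstance fac },
    fun h => ⟨h.toEpi, fun _ p i _ fac => h.isIso p i fac⟩⟩

theorem ExtremalEpi.strongEpi [HasPullbacks C] {X Y : C} {f : X ⟶ Y} (hf : ExtremalEpi f) :
    StrongEpi f :=
  (extremalEpi_iff_strongEpi_of_hasPullbacks f).1 ((extremalEpi_iff f).1 hf)

theorem ExtremalEpi.of_strongEpi {X Y : C} (f : X ⟶ Y) [StrongEpi f] : ExtremalEpi f :=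
  (extremalEpi_iff f).2 inferInstance

theorem ExtremalEpi.comp [HasPullbacks C] {X Y Z : C} {f : X ⟶ Y} {g : Y ⟶ Z}
    (hf : ExtremalEpi f) (hg : ExtremalEpi g) : ExtremalEpi (f ≫ g) :=
  have := hf.strongEpi
  have := hg.strongEpi
  .of_strongEpi _

theorem ExtremalEpi.exists_lift [HasPullbacks C] {A B Z X : C} {e : A ⟶ B} {m : Z ⟶ X}
    {g : A ⟶ Z} {h : B ⟶ X} (he : ExtremalEpi e) (hm : Mono m) (w : g ≫ m = e ≫ h) :
    ∃ d : B ⟶ Z, e ≫ d = g ∧ d ≫ m = h :=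
  have := he.strongEpi
  have sq : CommSq g e m h := ⟨w⟩
  ⟨sq.lift, sq.fac_left, sq.fac_right⟩

theorem extremalEpi_widePushout_head [HasPullbacks C] {ι : Type w} {A : C} {Y : ι → C}
    (q : ∀ i, A ⟶ Y i) (hq : ∀ i, ExtremalEpi (q i)) [HasWidePushout A Y q] :
    ExtremalEpi (WidePushout.head q) := by
  have hepi : Epi (WidePushout.head q) := ⟨fun u v huv => WidePushout.hom_ext q _ _
    (fun i => (hq i).1.left_cancellation _ _ (by simpa only [WidePushout.arrow_ι_assoc])) huv⟩
  refine ⟨hepi, fun V g m hm hgm => ?_⟩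
  have hd : ∀ i, ∃ d : Y i ⟶ V, q i ≫ d = g ∧ d ≫ m = WidePushout.ι q i := fun i =>
    (hq i).exists_lift hm (by rw [hgm, WidePushout.arrow_ι])
  choose d hdq hdm using hd
  have hsplit : WidePushout.desc g d hdq ≫ m = 𝟙 _ := by
    apply WidePushout.hom_ext
    · intro i
      rw [WidePushout.ι_desc_assoc, hdm, Category.comp_id]
    · rw [WidePushout.head_desc_assoc, hgm, Category.comp_id]
  have : IsSplitEpi m := .mk' ⟨_, hsplit⟩
  exact isIso_of_mono_of_isSplitEpi m

/-- The comparison map from the wide pushout to `X` is mono because coequalising two maps into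
it would produce a yet smaller extremal quotient through which `f` factors. -/
theorem exists_extremalEpi_mono_fac [HasPullbacks C] [HasWidePushouts.{v₂} C] [HasCoequalizers C]
    (hC : ECWP C) {A X : C} (f : A ⟶ X) :
    ∃ (Z : C) (e : A ⟶ Z) (m : Z ⟶ X), ExtremalEpi e ∧ Mono m ∧ e ≫ m = f := by
  obtain ⟨ι, Y, q, hq, hcov⟩ := hC A
  let I := {i : ι // ∃ g : Y i ⟶ X, q i ≫ g = f}
  choose g hg using fun i : I => i.2
  let qI : ∀ i : I, A ⟶ Y i.1 := fun i => q i.1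
  have he : ExtremalEpi (WidePushout.head qI) := extremalEpi_widePushout_head qI (fun i => hq i.1)
  refine ⟨_, WidePushout.head qI, WidePushout.desc f g hg, he, ⟨fun {T} u v huv => ?_⟩,
    WidePushout.head_desc _ _ _ _⟩
  obtain ⟨i, φ, hφ⟩ := hcov _ (he.comp (.of_strongEpi (coequalizer.π u v)))
  have hi : ∃ g : Y i ⟶ X, q i ≫ g = f :=
    ⟨φ.hom ≫ coequalizer.desc _ huv, by
      rw [reassoc_of% hφ, coequalizer.π_desc, WidePushout.head_desc]⟩
  have hsplit : coequalizer.π u v ≫ φ.inv ≫ WidePushout.ι qI ⟨i, hi⟩ = 𝟙 _ :=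
    he.1.left_cancellation _ _ (by
      rw [← Category.assoc, ← hφ, Category.assoc, Iso.hom_inv_id_assoc, Category.comp_id]
      exact WidePushout.arrow_ι qI ⟨i, hi⟩)
  have : IsSplitMono (coequalizer.π u v) := .mk' ⟨_, hsplit⟩
  exact (cancel_mono (coequalizer.π u v)).1 (coequalizer.condition u v)

theorem emCat_of_ecwp [HasPullbacks C] [HasWidePushouts.{v₂} C] [HasCoequalizers C]
    (hC : ECWP C) : EMCat C where
  fact f := exists_extremalEpi_mono_fac hC f
  diag _ _ _ _ he hm w := he.exists_lift hm w

end ExtremalEpis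

section Filtrations

variable {X : D}

theorem Dom.refl (δ : MorFrom X) : Dom δ δ := ⟨𝟙 _, Category.comp_id _⟩

theorem Dom.trans {δ₁ δ₂ δ₃ : MorFrom X} : Dom δ₁ δ₂ → Dom δ₂ δ₃ → Dom δ₁ δ₃
  | ⟨h₁, e₁⟩, ⟨h₂, e₂⟩ => ⟨h₁ ≫ h₂, by rw [← Category.assoc, e₁, e₂]⟩

theorem ProjFilt.comp_mem (P : ProjFilt X) {T : D} {g : X ⟶ T}
    (h : (⟨T, g⟩ : MorFrom X) ∈ P.carrier) {U : D} (s : T ⟶ U) :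
    (⟨U, g ≫ s⟩ : MorFrom X) ∈ P.carrier :=
  P.saturated' _ h _ ⟨s, rfl⟩

theorem ProjFilt.terminal_mem [HasTerminal D] (P : ProjFilt X) :
    (⟨⊤_ D, terminal.from X⟩ : MorFrom X) ∈ P.carrier :=
  let ⟨δ, hδ⟩ := P.nonempty'
  P.saturated' δ hδ _ ⟨terminal.from _, terminal.comp_from _⟩

theorem ProjFilt.prod_lift_mem [HasBinaryProducts D] (P : ProjFilt X) {δ₁ δ₂ : MorFrom X}
    (h₁ : δ₁ ∈ P.carrier) (h₂ : δ₂ ∈ P.carrier) :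
    (⟨δ₁.1 ⨯ δ₂.1, prod.lift δ₁.2 δ₂.2⟩ : MorFrom X) ∈ P.carrier := by
  obtain ⟨ζ, hζ, ⟨k₁, e₁⟩, ⟨k₂, e₂⟩⟩ := P.directed' _ h₁ _ h₂
  exact P.saturated' ζ hζ _ ⟨prod.lift k₁ k₂, by rw [prod.comp_lift, e₁, e₂]⟩

/-- Two parallel arrows of `FiltCat P` are equalised by the extremal epimorphism of `P` that
dominates their source. -/
theorem ProjFilt.Reduced.isCofiltered {P : ProjFilt X} (hP : P.Reduced) :
    IsCofiltered (FiltCat P) where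
  cone_objs δ₁ δ₂ :=
    let ⟨ζ, hζ, ⟨k₁, e₁⟩, ⟨k₂, e₂⟩⟩ := P.directed' _ δ₁.2 _ δ₂.2
    ⟨⟨ζ, hζ⟩, ⟨k₁, e₁⟩, ⟨k₂, e₂⟩, trivial⟩
  cone_maps δ₁ δ₂ f g := by
    obtain ⟨ε, hε, hεe, k, hk⟩ := hP _ δ₁.2
    refine ⟨⟨ε, hε⟩, ⟨k, hk⟩, Subtype.ext (hεe.1.left_cancellation _ _ ?_)⟩
    change ε.2 ≫ k ≫ f.1 = ε.2 ≫ k ≫ g.1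
    rw [reassoc_of% hk, reassoc_of% hk, f.2, g.2]
  nonempty := let ⟨δ, hδ⟩ := P.nonempty'; ⟨⟨δ, hδ⟩⟩

variable [HasTerminal D] [HasBinaryProducts D]

inductive ProdClosure (S : Set (MorFrom X)) : MorFrom X → Prop
  | of {δ : MorFrom X} : δ ∈ S → ProdClosure S δ
  | terminal : ProdClosure S ⟨⊤_ D, terminal.from X⟩
  | prod {δ₁ δ₂ : MorFrom X} : ProdClosure S δ₁ → ProdClosure S δ₂ →
      ProdClosure S ⟨δ₁.1 ⨯ δ₂.1, prod.lift δ₁.2 δ₂.2⟩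

variable (hEM : EMCat D)

def genFilt (S : Set (MorFrom X)) : ProjFilt X where
  carrier := redSet {δ | ProdClosure S δ}
  nonempty' :=
    let ⟨Z, e, m, he, hm, hem⟩ := hEM.fact (terminal.from X)
    ⟨⟨Z, e⟩, ⟨Z, e⟩, he, ⟨_, .terminal, m, hm, hem⟩, Dom.refl _⟩
  directed' := by
    rintro δ₁ ⟨ε₁, -, ⟨χ₁, hχ₁, m₁, hm₁, hεm₁⟩, hd₁⟩ δ₂ ⟨ε₂, -, ⟨χ₂, hχ₂, m₂, hm₂, hεm₂⟩, hd₂⟩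
    obtain ⟨Z, a, b, ha, hb, hab⟩ := hEM.fact (prod.lift χ₁.2 χ₂.2)
    obtain ⟨d₁, hd₁', -⟩ := hEM.diag a m₁ ε₁.2 (b ≫ prod.fst) ha hm₁
      (by rw [hεm₁, reassoc_of% hab, prod.lift_fst])
    obtain ⟨d₂, hd₂', -⟩ := hEM.diag a m₂ ε₂.2 (b ≫ prod.snd) ha hm₂
      (by rw [hεm₂, reassoc_of% hab, prod.lift_snd])
    exact ⟨⟨Z, a⟩, ⟨⟨Z, a⟩, ha, ⟨_, .prod hχ₁ hχ₂, b, hb, hab⟩, Dom.refl _⟩,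
      Dom.trans ⟨d₁, hd₁'⟩ hd₁, Dom.trans ⟨d₂, hd₂'⟩ hd₂⟩
  saturated' := fun _ ⟨ε, he, hw, hd⟩ _ hd' => ⟨ε, he, hw, hd.trans hd'⟩

variable {hEM}

theorem ProdClosure.mem_genFilt {S : Set (MorFrom X)} {δ : MorFrom X} (h : ProdClosure S δ) :
    δ ∈ (genFilt hEM S).carrier :=
  let ⟨Z, e, m, he, hm, hem⟩ := hEM.fact δ.2
  ⟨⟨Z, e⟩, he, ⟨δ, h, m, hm, hem⟩, ⟨m, hem⟩⟩

theorem subset_genFilt {S : Set (MorFrom X)} : S ⊆ (genFilt hEM S).carrier :=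
  fun _ h => (ProdClosure.of h).mem_genFilt

variable (hEM) in
theorem genFilt_reduced (S : Set (MorFrom X)) : (genFilt hEM S).Reduced :=
  fun _ ⟨ε, he, hw, hd⟩ => ⟨ε, ⟨ε, he, hw, Dom.refl _⟩, he, hd⟩

theorem genFilt_induction {S : Set (MorFrom X)} {Q : MorFrom X → Prop} (of : ∀ γ ∈ S, Q γ)
    (terminal : Q ⟨⊤_ D, terminal.from X⟩)
    (prod : ∀ δ₁ δ₂, ProdClosure S δ₁ → ProdClosure S δ₂ → Q δ₁ → Q δ₂ →
      Q ⟨δ₁.1 ⨯ δ₂.1, prod.lift δ₁.2 δ₂.2⟩)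
    (mono : ∀ (ε χ : MorFrom X) (m : ε.1 ⟶ χ.1), ExtremalEpi ε.2 → ProdClosure S χ → Mono m →
      ε.2 ≫ m = χ.2 → Q χ → Q ε)
    {δ : MorFrom X} (hδ : δ ∈ (genFilt hEM S).carrier) :
    ∃ ε ∈ (genFilt hEM S).carrier, ExtremalEpi ε.2 ∧ Q ε ∧ Dom ε δ := by
  have closure {χ : MorFrom X} (hχ : ProdClosure S χ) : Q χ := by
    induction hχ with
    | of h => exact of _ h
    | terminal => exact terminal
    | prod h₁ h₂ ih₁ ih₂ => exact prod _ _ h₁ h₂ ih₁ ih₂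
  obtain ⟨ε, he, ⟨χ, hχ, m, hm, hεm⟩, hd⟩ := hδ
  exact ⟨ε, ⟨ε, he, ⟨χ, hχ, m, hm, hεm⟩, Dom.refl _⟩, he, mono ε χ m he hχ hm hεm (closure hχ), hd⟩

theorem genFilt_pull_mem {S : Set (MorFrom X)} {X' : D} (φ : X' ⟶ X) {P' : ProjFilt X'}
    (hP' : P'.Reduced) (hS : ∀ γ ∈ S, (⟨γ.1, φ ≫ γ.2⟩ : MorFrom X') ∈ P'.carrier)
    {δ : MorFrom X} (hδ : δ ∈ (genFilt hEM S).carrier) :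
    (⟨δ.1, φ ≫ δ.2⟩ : MorFrom X') ∈ P'.carrier := by
  obtain ⟨ε, -, -, hε, s, hs⟩ :=
    genFilt_induction (Q := fun γ => (⟨γ.1, φ ≫ γ.2⟩ : MorFrom X') ∈ P'.carrier)
    hS (by rw [terminal.comp_from]; exact P'.terminal_mem)
    (fun _ _ _ _ h₁ h₂ => by rw [prod.comp_lift]; exact P'.prod_lift_mem h₁ h₂)
    (fun ε χ m hε _ hm hεm hχ => by
      obtain ⟨ρ, hρ, hρe, k, hk⟩ := hP' _ hχ
      obtain ⟨d, hd, -⟩ := hEM.diag ρ.2 m (φ ≫ ε.2) k hρe hm (by rw [Category.assoc, hεm, hk])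
      exact P'.saturated' ρ hρ _ ⟨d, hd⟩)
    hδ
  have := P'.comp_mem hε s
  rwa [Category.assoc, hs] at this

theorem genFilt_cone_fac {S : Set (MorFrom X)} (c : Cone (FiltDiagram (genFilt hEM S)))
    (w : c.pt ⟶ X) (hw : ∀ γ (hγ : γ ∈ S), w ≫ γ.2 = c.π.app ⟨γ, subset_genFilt hγ⟩)
    (δ : FiltCat (genFilt hEM S)) : w ≫ δ.1.2 = c.π.app δ := by
  have leg (δ₁ δ₂ : FiltCat (genFilt hEM S)) (g : δ₁ ⟶ δ₂) : c.π.app δ₁ ≫ g.1 = c.π.app δ₂ :=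
    (c.w g)
  obtain ⟨ε, hε, -, hQ, s, hs⟩ := genFilt_induction
    (Q := fun γ => ∀ hγ : γ ∈ (genFilt hEM S).carrier, w ≫ γ.2 = c.π.app ⟨γ, hγ⟩)
    (fun γ h _ => hw γ h) (fun _ => terminal.hom_ext _ _)
    (fun δ₁ δ₂ h₁ h₂ ih₁ ih₂ h => by
      apply prod.hom_ext
      · rw [Category.assoc, prod.lift_fst, ih₁ h₁.mem_genFilt,
          ← leg ⟨_, h⟩ ⟨δ₁, h₁.mem_genFilt⟩ ⟨prod.fst, prod.lift_fst _ _⟩]; rfl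
      · rw [Category.assoc, prod.lift_snd, ih₂ h₂.mem_genFilt,
          ← leg ⟨_, h⟩ ⟨δ₂, h₂.mem_genFilt⟩ ⟨prod.snd, prod.lift_snd _ _⟩]; rfl)
    (fun ε χ m _ hχ hm hεm ih h => by
      refine (cancel_mono m).1 ?_
      rw [Category.assoc, hεm, ih hχ.mem_genFilt,
        ← leg ⟨ε, h⟩ ⟨χ, hχ.mem_genFilt⟩ ⟨m, hεm⟩]
      rfl)
    δ.2
  rw [← hs, ← Category.assoc, hQ hε, ← leg ⟨ε, hε⟩ δ ⟨s, hs⟩]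
  rfl

/-- The maps `c ρ` recover each element of `S` from its composite with `φ`; this propagates to
finite tuples and to their extremal epimorphic parts `ε`, and then `φ ≫ ε` is epi because it
is recovered from an extremal epimorphism of `P`. -/
theorem genFilt_dense {Y : D} {S : Set (MorFrom Y)} {P : ProjFilt X} (hP : P.Reduced) (φ : X ⟶ Y)
    (hφ : ∀ δ ∈ (genFilt hEM S).carrier, (⟨δ.1, φ ≫ δ.2⟩ : MorFrom X) ∈ P.carrier)
    (c : ∀ ρ ∈ P.carrier, Y ⟶ ρ.1)
    (hS : ∀ γ ∈ S, ∀ ρ (hρ : ρ ∈ P.carrier) (k : ρ.1 ⟶ γ.1), ρ.2 ≫ k = φ ≫ γ.2 → c ρ hρ ≫ k = γ.2)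
    {δ : MorFrom Y} (hδ : δ ∈ (genFilt hEM S).carrier) :
    ∃ ε ∈ (genFilt hEM S).carrier, Epi (φ ≫ ε.2) ∧ Dom ε δ := by
  obtain ⟨ε, hε, hεe, hQ, hd⟩ := genFilt_induction
    (Q := fun γ => ∀ ρ (hρ : ρ ∈ P.carrier) (k : ρ.1 ⟶ γ.1), ρ.2 ≫ k = φ ≫ γ.2 → c ρ hρ ≫ k = γ.2)
    hS (fun _ _ _ _ => terminal.hom_ext _ _)
    (fun δ₁ δ₂ _ _ ih₁ ih₂ ρ hρ k hk => prod.hom_ext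
      (by rw [Category.assoc, prod.lift_fst, ih₁ ρ hρ _ (by rw [reassoc_of% hk, prod.lift_fst])])
      (by rw [Category.assoc, prod.lift_snd, ih₂ ρ hρ _ (by rw [reassoc_of% hk, prod.lift_snd])]))
    (fun ε χ m _ _ hm hεm ih ρ hρ k hk => (cancel_mono m).1 (by
      rw [Category.assoc, hεm, ih ρ hρ _ (by rw [reassoc_of% hk, hεm])]))
    hδ
  refine ⟨ε, hε, ⟨fun {Z} u v huv => ?_⟩, hd⟩
  obtain ⟨ρ, hρ, hρe, k, hk⟩ := hP _ (hφ ε hε)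
  have hku : k ≫ u = k ≫ v := hρe.1.left_cancellation _ _ (by
    rw [reassoc_of% hk, reassoc_of% hk]; simpa using huv)
  exact hεe.1.left_cancellation _ _ (by rw [← hQ ρ hρ k hk, Category.assoc, Category.assoc, hku])

end Filtrations

section KObjBasics

abbrev KObj.base (A : KObj D) : D := (Kforget D).obj A

abbrev KObj.filt (A : KObj D) : ProjFilt A.base := A.obj.obj.filt

theorem KObj.reduced (A : KObj D) : A.filt.Reduced := A.obj.property

noncomputable def KObj.isLimit (A : KObj D) : IsLimit (filtCone A.filt) := A.property.some

theorem KObj.map_mem {A B : KObj D} (f : A ⟶ B) {δ : MorFrom B.base} (hδ : δ ∈ B.filt.carrier) :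
    (⟨δ.1, (Kforget D).map f ≫ δ.2⟩ : MorFrom A.base) ∈ A.filt.carrier :=
  f.hom.hom.mem δ hδ

def KObj.homMk {A B : KObj D} (f : A.base ⟶ B.base)
    (hf : ∀ δ ∈ B.filt.carrier, (⟨δ.1, f ≫ δ.2⟩ : MorFrom A.base) ∈ A.filt.carrier) : A ⟶ B :=
  ⟨⟨⟨f, hf⟩⟩⟩

@[simp] theorem KObj.map_homMk {A B : KObj D} (f : A.base ⟶ B.base) (hf) :
    (Kforget D).map (KObj.homMk f hf) = f := rfl

instance : (Kforget D).Faithful where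
  map_injective h := InducedCategory.hom_ext (InducedCategory.hom_ext (PHom.ext' h))

@[ext] theorem KObj.hom_ext {A B : KObj D} {f g : A ⟶ B}
    (h : (Kforget D).map f = (Kforget D).map g) : f = g :=
  (Kforget D).map_injective h

theorem KObj.hom_ext_of_filt (B : KObj D) {T : D} {x y : T ⟶ B.base}
    (h : ∀ δ ∈ B.filt.carrier, x ≫ δ.2 = y ≫ δ.2) : x = y :=
  B.isLimit.hom_ext fun δ => h δ.1 δ.2

def KObj.fromDiscrete {T : D} {B : KObj D} (g : T ⟶ B.base) : kDiscreteObj T ⟶ B :=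
  KObj.homMk g fun _ _ => trivial

theorem KObj.mono_iff {A B : KObj D} (f : A ⟶ B) : Mono f ↔ Mono ((Kforget D).map f) :=
  ⟨fun _ => ⟨fun u v h => congrArg (Kforget D).map
      ((cancel_mono f).1 (KObj.hom_ext (f := KObj.fromDiscrete u ≫ f)
        (g := KObj.fromDiscrete v ≫ f) h))⟩,
    fun _ => (Kforget D).mono_of_mono_map ‹_›⟩

theorem KObj.eq_of_epi_of_mem {A B : KObj D} (e : A ⟶ B) [Epi e] {T : D} {x y : B.base ⟶ T}
    (hx : (⟨T, x⟩ : MorFrom B.base) ∈ B.filt.carrier)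
    (hy : (⟨T, y⟩ : MorFrom B.base) ∈ B.filt.carrier)
    (h : (Kforget D).map e ≫ x = (Kforget D).map e ≫ y) : x = y :=
  congrArg (Kforget D).map ((cancel_epi e).1 (KObj.hom_ext (f := e ≫ kToDiscrete ⟨T, x⟩ hx)
    (g := e ≫ kToDiscrete ⟨T, y⟩ hy) h))

end KObjBasics

theorem FiltCat.cone_app_congr {X : D} {P : ProjFilt X} (s : Cone (FiltDiagram P)) {T : D}
    {f g : X ⟶ T} (h : f = g) (hf : (⟨T, f⟩ : MorFrom X) ∈ P.carrier)
    (hg : (⟨T, g⟩ : MorFrom X) ∈ P.carrier) :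
    s.π.app ⟨⟨T, f⟩, hf⟩ = s.π.app ⟨⟨T, g⟩, hg⟩ := by
  subst h; rfl

section Limits

variable [HasTerminal D] [HasBinaryProducts D] (hEM : EMCat D)
variable {J : Type u₂} [Category.{v₂} J] {G : J ⥤ KObj D}

def limitGens (c : Cone (G ⋙ Kforget D)) : Set (MorFrom c.pt) :=
  {γ | ∃ j, ∃ ξ ∈ (G.obj j).filt.carrier, γ = ⟨ξ.1, c.π.app j ≫ ξ.2⟩}

abbrev limitFilt (c : Cone (G ⋙ Kforget D)) : ProjFilt c.pt := genFilt hEM (limitGens c)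

theorem mem_limitFilt (c : Cone (G ⋙ Kforget D)) (j : J) {ξ : MorFrom (G.obj j).base}
    (hξ : ξ ∈ (G.obj j).filt.carrier) :
    (⟨ξ.1, c.π.app j ≫ ξ.2⟩ : MorFrom c.pt) ∈ (limitFilt hEM c).carrier :=
  subset_genFilt ⟨j, ξ, hξ, rfl⟩

variable {c : Cone (G ⋙ Kforget D)}

@[simps] def limitFilt.restrictCone (s : Cone (FiltDiagram (limitFilt hEM c))) (j : J) :
    Cone (FiltDiagram (G.obj j).filt) where
  pt := s.pt
  π.app ξ := s.π.app ⟨_, mem_limitFilt hEM c j ξ.2⟩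
  π.naturality ξ₁ ξ₂ g := (Category.id_comp _).trans
    (s.w (j := ⟨_, mem_limitFilt hEM c j ξ₁.2⟩) (j' := ⟨_, mem_limitFilt hEM c j ξ₂.2⟩)
      ⟨g.1, by rw [Category.assoc, g.2]⟩).symm

@[simps] noncomputable def limitFilt.liftCone (s : Cone (FiltDiagram (limitFilt hEM c))) :
    Cone (G ⋙ Kforget D) where
  pt := s.pt
  π.app j := (G.obj j).isLimit.lift (restrictCone hEM s j)
  π.naturality j j' α := by
    refine (Category.id_comp _).trans ((G.obj j').hom_ext_of_filt fun ξ hξ => ?_)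
    have h₁ := (G.obj j).isLimit.fac (restrictCone hEM s j) ⟨_, KObj.map_mem (G.map α) hξ⟩
    have h₂ := (G.obj j').isLimit.fac (restrictCone hEM s j') ⟨ξ, hξ⟩
    dsimp only [filtCone, restrictCone_π_app] at h₁ h₂
    erw [Category.assoc, h₁, h₂]
    exact (FiltCat.cone_app_congr s
      ((Category.assoc _ _ _).symm.trans (congrArg (· ≫ ξ.2) (c.w α))) _ _).symm

variable {hEM} in
theorem limitFilt.lift_comp_mem {hc : IsLimit c} (s : Cone (FiltDiagram (limitFilt hEM c))) (j : J)
    {ξ : MorFrom (G.obj j).base} (hξ : ξ ∈ (G.obj j).filt.carrier) :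
    (hc.lift (liftCone hEM s) : s.pt ⟶ c.pt) ≫ c.π.app j ≫ ξ.2 =
      s.π.app ⟨_, mem_limitFilt hEM c j hξ⟩ := by
  rw [← Category.assoc]
  erw [hc.fac (liftCone hEM s) j]
  exact (G.obj j).isLimit.fac (restrictCone hEM s j) ⟨ξ, hξ⟩

noncomputable def isLimitLimitFilt (hc : IsLimit c) : IsLimit (filtCone (limitFilt hEM c)) where
  lift s := hc.lift (limitFilt.liftCone hEM s)
  fac s := genFilt_cone_fac s _ fun _ ⟨j, ξ, hξ, h⟩ => by
    subst h
    exact limitFilt.lift_comp_mem s j hξ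
  uniq s m hm := hc.hom_ext fun j => (G.obj j).hom_ext_of_filt fun ξ hξ => by
    erw [Category.assoc, Category.assoc, limitFilt.lift_comp_mem s j hξ]
    exact hm ⟨_, mem_limitFilt hEM c j hξ⟩

variable (hc : IsLimit c)

noncomputable def limitObj : KObj D :=
  ⟨⟨⟨c.pt, limitFilt hEM c⟩, genFilt_reduced hEM _⟩, ⟨isLimitLimitFilt hEM hc⟩⟩

@[simps] noncomputable def limitCone : Cone G where
  pt := limitObj hEM hc
  π.app j := KObj.homMk (c.π.app j) fun _ hξ => mem_limitFilt hEM c j hξ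
  π.naturality _ _ α := (Category.id_comp _).trans (KObj.hom_ext (c.w α).symm)

noncomputable def isLimitLimitCone : IsLimit (limitCone hEM hc) where
  lift s := KObj.homMk (hc.lift ((Kforget D).mapCone s)) fun _ hδ =>
    genFilt_pull_mem (hEM := hEM) _ s.pt.reduced (by
      rintro _ ⟨j, ξ, hξ, rfl⟩
      have h : (hc.lift ((Kforget D).mapCone s) : s.pt.base ⟶ c.pt) ≫ c.π.app j =
          (Kforget D).map (s.π.app j) := hc.fac _ j
      change (⟨ξ.1, _ ≫ c.π.app j ≫ ξ.2⟩ : MorFrom s.pt.base) ∈ _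
      erw [← Category.assoc, h]
      exact KObj.map_mem (s.π.app j) hξ) hδ
  fac s j := KObj.hom_ext (hc.fac _ j)
  uniq s m hm := KObj.hom_ext (hc.uniq ((Kforget D).mapCone s) _ fun j =>
    congrArg (Kforget D).map (hm j))

theorem KObj.hasLimit_of_hasLimit_comp_forget (hEM : EMCat D) [HasLimit (G ⋙ Kforget D)] :
    HasLimit G :=
  ⟨⟨⟨_, isLimitLimitCone hEM (limit.isLimit _)⟩⟩⟩

theorem KObj.hasLimitsOfShape (hEM : EMCat D) [HasLimitsOfShape J D] :
    HasLimitsOfShape J (KObj D) :=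
  ⟨fun _ => KObj.hasLimit_of_hasLimit_comp_forget hEM⟩

end Limits

section KObjExtremalEpis

variable [HasPullbacks D] [HasTerminal D] [HasBinaryProducts D]

theorem KObj.exists_lift (hEM : EMCat D) {A B Z X : KObj D} {e : A ⟶ B} {m : Z ⟶ X} {g : A ⟶ Z}
    {h : B ⟶ X} (he : ExtremalEpi e) (hm : Mono m) (w : g ≫ m = e ≫ h) :
    ∃ d : B ⟶ Z, e ≫ d = g ∧ d ≫ m = h :=
  have : HasPullbacks (KObj D) := KObj.hasLimitsOfShape hEM
  he.exists_lift hm w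

/-- Lifting in `KD` against the monomorphism of discrete objects given by `b` shows that the
monomorphic part of `e ≫ ρ` is split epi. -/
theorem ExtremalEpi.map_comp_mem (hEM : EMCat D) {A B : KObj D} {e : A ⟶ B} (he : ExtremalEpi e)
    {ρ : MorFrom B.base} (hρ : ρ ∈ B.filt.carrier) (hρe : ExtremalEpi ρ.2) :
    ExtremalEpi ((Kforget D).map e ≫ ρ.2) := by
  obtain ⟨V, a, b, ha, hb, hab⟩ := hEM.fact ((Kforget D).map e ≫ ρ.2)
  have haA : (⟨V, a⟩ : MorFrom A.base) ∈ A.filt.carrier := by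
    obtain ⟨ε, hε, hεe, k, hk⟩ := A.reduced _ (KObj.map_mem e hρ)
    obtain ⟨d, hd, -⟩ := hEM.diag ε.2 b a k hεe hb (by rw [hab]; exact hk.symm)
    exact A.filt.saturated' ε hε _ ⟨d, hd⟩
  have hbK : Mono (KObj.fromDiscrete (B := kDiscreteObj ρ.1) b) := (KObj.mono_iff _).2 hb
  obtain ⟨d, -, hd⟩ := KObj.exists_lift hEM he hbK (g := kToDiscrete ⟨V, a⟩ haA)
    (h := kToDiscrete ρ hρ) (KObj.hom_ext hab)
  have : IsIso b := hρe.2 _ b hb (congrArg (Kforget D).map hd)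
  rw [← hab]
  exact ha.comp (.of_strongEpi b)

end KObjExtremalEpis

theorem KObj.hom_ext_of_dense {L W : KObj D} {X : D} (φ : X ⟶ L.base)
    (hφ : ∀ δ ∈ L.filt.carrier, ∃ ε ∈ L.filt.carrier, Epi (φ ≫ ε.2) ∧ Dom ε δ)
    {x y : L ⟶ W} (h : φ ≫ (Kforget D).map x = φ ≫ (Kforget D).map y) : x = y := by
  refine KObj.hom_ext (W.hom_ext_of_filt fun π hπ => ?_)
  obtain ⟨ζ, hζ, ⟨a, ha⟩, ⟨b, hb⟩⟩ :=
    L.filt.directed' _ (KObj.map_mem x hπ) _ (KObj.map_mem y hπ)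
  obtain ⟨ε, -, hεe, s, hs⟩ := hφ ζ hζ
  change ζ.2 ≫ a = (Kforget D).map x ≫ π.2 at ha
  change ζ.2 ≫ b = (Kforget D).map y ≫ π.2 at hb
  have : s ≫ a = s ≫ b := hεe.left_cancellation _ _ (by
    rw [Category.assoc, reassoc_of% hs, ha, Category.assoc, reassoc_of% hs, hb,
      reassoc_of% h])
  rw [← ha, ← hb, ← hs, Category.assoc, Category.assoc, this]

section Reflection

variable {X : D}

structure ProjFilt.SmallCover (P : ProjFilt X) where
  K : Type v
  F : K → FiltCat P
  [initial : (inducedFunctor F).Initial]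

attribute [instance] ProjFilt.SmallCover.initial

theorem ProjFilt.Reduced.nonempty_smallCover {P : ProjFilt X} (hP : P.Reduced) (hD : ECWP D) :
    Nonempty P.SmallCover := by
  obtain ⟨ι, Y, e, -, hcov⟩ := hD X
  have := hP.isCofiltered
  let K := {i : ι // (⟨Y i, e i⟩ : MorFrom X) ∈ P.carrier}
  let F : K → FiltCat P := fun i => ⟨_, i.2⟩
  refine ⟨{ K, F, initial := ?_ }⟩
  refine Functor.initial_of_exists_of_isCofiltered_of_fullyFaithful _ fun δ => ?_
  obtain ⟨ρ, hρ, hρe, k, hk⟩ := hP _ δ.2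
  obtain ⟨i, φ, hφ⟩ := hcov _ hρe
  have hi : (⟨Y i, e i⟩ : MorFrom X) ∈ P.carrier := by
    have := P.comp_mem hρ φ.inv
    rwa [← hφ, Category.assoc, Iso.hom_inv_id, Category.comp_id] at this
  exact ⟨⟨i, hi⟩, ⟨⟨φ.hom ≫ k, (Category.assoc _ _ _).symm.trans ((congrArg (· ≫ k) hφ).trans hk)⟩⟩⟩

variable [HasLimits D] (hEM : EMCat D) {P : ProjFilt X} (S : P.SmallCover)

abbrev ProjFilt.SmallCover.diagram : InducedCategory (FiltCat P) S.F ⥤ KObj D :=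
  inducedFunctor S.F ⋙ FiltDiagram P ⋙ kDiscrete D

noncomputable def ProjFilt.SmallCover.reflection : KObj D :=
  limitObj hEM (G := S.diagram) (limit.isLimit (inducedFunctor S.F ⋙ FiltDiagram P))

noncomputable def ProjFilt.SmallCover.unit : X ⟶ (S.reflection hEM).base :=
  limit.lift (inducedFunctor S.F ⋙ FiltDiagram P) ((filtCone P).whisker _)

/-- The limit cone over the small family, extended to all of `FiltCat P` by initiality. -/
noncomputable def ProjFilt.SmallCover.extCone : Cone (FiltDiagram P) :=
  Functor.Initial.extendCone.obj (limit.cone (inducedFunctor S.F ⋙ FiltDiagram P))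

theorem ProjFilt.SmallCover.unit_π (k : InducedCategory (FiltCat P) S.F) :
    S.unit hEM ≫ limit.π (inducedFunctor S.F ⋙ FiltDiagram P) k = (S.F k).1.2 :=
  limit.lift_π _ _

theorem ProjFilt.SmallCover.unit_π_comp (k : InducedCategory (FiltCat P) S.F) {T : D}
    (f : (S.F k).1.1 ⟶ T) :
    S.unit hEM ≫ limit.π (inducedFunctor S.F ⋙ FiltDiagram P) k ≫ f = (S.F k).1.2 ≫ f :=
  (Category.assoc _ _ _).symm.trans (congrArg (· ≫ f) (S.unit_π hEM k))

theorem ProjFilt.SmallCover.extCone_π_app {k : InducedCategory (FiltCat P) S.F} {δ : FiltCat P}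
    (g : S.F k ⟶ δ) :
    S.extCone.π.app δ = limit.π (inducedFunctor S.F ⋙ FiltDiagram P) k ≫ g.1 :=
  Functor.Initial.extendCone_obj_π_app' (F := inducedFunctor S.F) (G := FiltDiagram P) _ g

theorem ProjFilt.SmallCover.unit_extCone (δ : FiltCat P) :
    S.unit hEM ≫ S.extCone.π.app δ = δ.1.2 := by
  let g := Functor.Initial.homToLift (inducedFunctor S.F) δ
  rw [S.extCone_π_app g]
  exact (S.unit_π_comp hEM _ g.1).trans g.2

theorem ProjFilt.SmallCover.extCone_mem (δ : FiltCat P) :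
    (⟨δ.1.1, S.extCone.π.app δ⟩ : MorFrom (S.reflection hEM).base) ∈
      (S.reflection hEM).filt.carrier := by
  let g := Functor.Initial.homToLift (inducedFunctor S.F) δ
  rw [S.extCone_π_app g]
  exact mem_limitFilt hEM (G := S.diagram) _ _ (ξ := ⟨δ.1.1, g.1⟩) trivial

theorem ProjFilt.SmallCover.unit_mem (hP : P.Reduced) {γ : MorFrom (S.reflection hEM).base}
    (hγ : γ ∈ (S.reflection hEM).filt.carrier) :
    (⟨γ.1, S.unit hEM ≫ γ.2⟩ : MorFrom X) ∈ P.carrier :=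
  genFilt_pull_mem (hEM := hEM) _ hP (by
    rintro _ ⟨k, ξ, -, rfl⟩
    convert P.comp_mem (S.F k).2 ξ.2 using 2
    exact S.unit_π_comp hEM k ξ.2) hγ

theorem ProjFilt.SmallCover.hom_ext (hP : P.Reduced) {W : KObj D} {x y : S.reflection hEM ⟶ W}
    (h : S.unit hEM ≫ (Kforget D).map x = S.unit hEM ≫ (Kforget D).map y) : x = y := by
  refine KObj.hom_ext_of_dense (S.unit hEM) (fun δ hδ => genFilt_dense (hEM := hEM) hP (S.unit hEM)
    (fun _ => S.unit_mem hEM hP) (fun ρ hρ => S.extCone.π.app ⟨ρ, hρ⟩) ?_ hδ) h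
  rintro _ ⟨k, ξ, -, rfl⟩ ρ hρ κ hκ
  have hκ' : (S.F k).1.2 ≫ ξ.2 = ρ.2 ≫ κ := (S.unit_π_comp hEM k ξ.2).symm.trans hκ.symm
  have hmem := P.comp_mem hρ κ
  exact (S.extCone.w (j := ⟨ρ, hρ⟩) (j' := ⟨_, hmem⟩) ⟨κ, rfl⟩).trans
    (S.extCone_π_app (k := k) (δ := ⟨_, hmem⟩) ⟨ξ.2, hκ'⟩)

@[simps] def FiltCat.pullFunctor {Y : D} {Q : ProjFilt Y} (h : X ⟶ Y)
    (hh : ∀ π ∈ Q.carrier, (⟨π.1, h ≫ π.2⟩ : MorFrom X) ∈ P.carrier) : FiltCat Q ⥤ FiltCat P where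
  obj π := ⟨⟨π.1.1, h ≫ π.1.2⟩, hh _ π.2⟩
  map g := ⟨g.1, by rw [Category.assoc, g.2]⟩

noncomputable def ProjFilt.SmallCover.desc {W : KObj D} (h : X ⟶ W.base)
    (hh : ∀ π ∈ W.filt.carrier, (⟨π.1, h ≫ π.2⟩ : MorFrom X) ∈ P.carrier) :
    S.reflection hEM ⟶ W :=
  KObj.homMk (W.isLimit.lift (S.extCone.whisker (FiltCat.pullFunctor h hh))) fun π hπ => by
    have := W.isLimit.fac (S.extCone.whisker (FiltCat.pullFunctor h hh)) ⟨π, hπ⟩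
    erw [this]
    exact S.extCone_mem hEM ((FiltCat.pullFunctor h hh).obj ⟨π, hπ⟩)

theorem ProjFilt.SmallCover.unit_desc {W : KObj D} (h : X ⟶ W.base)
    (hh : ∀ π ∈ W.filt.carrier, (⟨π.1, h ≫ π.2⟩ : MorFrom X) ∈ P.carrier) :
    S.unit hEM ≫ (Kforget D).map (S.desc hEM h hh) = h :=
  W.hom_ext_of_filt fun π hπ => by
    have := W.isLimit.fac (S.extCone.whisker (FiltCat.pullFunctor h hh)) ⟨π, hπ⟩
    erw [Category.assoc, this]
    exact S.unit_extCone hEM _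

end Reflection

section Colimits

variable {J : Type u₂} [Category.{v₂} J] {G : J ⥤ KObj D}

/-- The filtration on a colimit in `D`; its reflection into `KD` is the colimit in `KD`. -/
def gluedFilt [HasTerminal D] [HasBinaryProducts D] (c : Cocone (G ⋙ Kforget D)) :
    ProjFilt c.pt where
  carrier := {γ | ∀ j, (⟨γ.1, c.ι.app j ≫ γ.2⟩ : MorFrom (G.obj j).base) ∈ (G.obj j).filt.carrier}
  nonempty' := ⟨⟨⊤_ D, terminal.from _⟩, fun j => by
    convert (G.obj j).filt.terminal_mem using 3
    exact terminal.comp_from _⟩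
  directed' γ₁ h₁ γ₂ h₂ := ⟨⟨γ₁.1 ⨯ γ₂.1, prod.lift γ₁.2 γ₂.2⟩,
    fun j => by rw [prod.comp_lift]; exact (G.obj j).filt.prod_lift_mem (h₁ j) (h₂ j),
    ⟨prod.fst, prod.lift_fst _ _⟩, ⟨prod.snd, prod.lift_snd _ _⟩⟩
  saturated' := by
    rintro γ₁ h γ₂ ⟨k, hk⟩ j
    have := (G.obj j).filt.comp_mem (h j) k
    rwa [Category.assoc, hk] at this

theorem gluedFilt_reduced [HasTerminal D] [HasBinaryProducts D] (hEM : EMCat D)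
    (c : Cocone (G ⋙ Kforget D)) : (gluedFilt c).Reduced := by
  intro γ hγ
  obtain ⟨Z, a, b, ha, hb, hab⟩ := hEM.fact γ.2
  refine ⟨⟨Z, a⟩, fun j => ?_, ha, ⟨b, hab⟩⟩
  obtain ⟨ε, hε, hεe, k, hk⟩ := (G.obj j).reduced _ (hγ j)
  obtain ⟨d, hd, -⟩ := hEM.diag ε.2 b (c.ι.app j ≫ a) k hεe hb
    (by rw [Category.assoc, hab]; exact hk.symm)
  exact (G.obj j).filt.saturated' ε hε _ ⟨d, hd⟩

variable [HasLimits D] (hEM : EMCat D) {c : Cocone (G ⋙ Kforget D)} (S : (gluedFilt c).SmallCover)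

@[simps] noncomputable def colimitCocone : Cocone G where
  pt := S.reflection hEM
  ι.app j := KObj.homMk (c.ι.app j ≫ S.unit hEM) fun _ hγ => by
    have := S.unit_mem hEM (gluedFilt_reduced hEM c) hγ j
    rwa [← Category.assoc] at this
  ι.naturality j j' α := KObj.hom_ext (by
    refine (Category.assoc _ _ _).symm.trans ?_
    erw [c.w α, Category.comp_id]
    rfl)

noncomputable def isColimitColimitCocone (hc : IsColimit c) : IsColimit (colimitCocone hEM S) where
  desc s := S.desc hEM (hc.desc ((Kforget D).mapCocone s)) fun π hπ j => by
    have h : c.ι.app j ≫ hc.desc ((Kforget D).mapCocone s) = (Kforget D).map (s.ι.app j) :=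
      hc.fac _ j
    erw [← Category.assoc, h]
    exact KObj.map_mem (s.ι.app j) hπ
  fac s j := KObj.hom_ext ((Category.assoc _ _ _).trans
    ((congrArg (c.ι.app j ≫ ·) (S.unit_desc hEM _ _)).trans (hc.fac _ j)))
  uniq s m hm := S.hom_ext hEM (gluedFilt_reduced hEM c) (hc.hom_ext fun j =>
    ((Category.assoc _ _ _).symm.trans (congrArg (Kforget D).map (hm j))).trans
      ((hc.fac ((Kforget D).mapCocone s) j).symm.trans
        (congrArg (c.ι.app j ≫ ·) (S.unit_desc hEM _ _)).symm))

theorem KObj.hasColimitsOfShape (hEM : EMCat D) (hD : ECWP D) [HasColimitsOfShape J D] :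
    HasColimitsOfShape J (KObj D) :=
  ⟨fun G => ⟨⟨⟨_, isColimitColimitCocone hEM
    ((gluedFilt_reduced hEM _).nonempty_smallCover hD).some (colimit.isColimit (G ⋙ Kforget D))⟩⟩⟩⟩

end Colimits

theorem KObj.isIso_of_isIso_map {A B : KObj D} (f : A ⟶ B) [IsIso ((Kforget D).map f)]
    (h : ∀ δ ∈ A.filt.carrier,
      (⟨δ.1, inv ((Kforget D).map f) ≫ δ.2⟩ : MorFrom B.base) ∈ B.filt.carrier) : IsIso f :=
  ⟨KObj.homMk (inv ((Kforget D).map f)) h, KObj.hom_ext (by simp), KObj.hom_ext (by simp)⟩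

@[simps] def KObj.discCone (A : KObj D) : Cone (FiltDiagram A.filt ⋙ kDiscrete D) where
  pt := A
  π.app δ := kToDiscrete δ.1 δ.2
  π.naturality _ _ g := KObj.hom_ext ((Category.id_comp _).trans g.2.symm)

section Quotients

variable {A : KObj D} {ι : Type v} {Y : ι → D}

variable (A Y) in
abbrev SmallElem : Type v :=
  {p : Σ i, A.base ⟶ Y i // (⟨Y p.1, p.2⟩ : MorFrom A.base) ∈ A.filt.carrier}

def SmallElem.toFiltCat (p : SmallElem A Y) : FiltCat A.filt := ⟨⟨Y p.1.1, p.1.2⟩, p.2⟩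

def quotSystem {B : KObj D} (e : A ⟶ B) : Set (SmallElem A Y) :=
  {p | ∃ β : B.base ⟶ Y p.1.1, (⟨_, β⟩ : MorFrom B.base) ∈ B.filt.carrier ∧
    (Kforget D).map e ≫ β = p.1.2}

variable {B : KObj D} (e : A ⟶ B)

noncomputable def quotSystem.lift (p : quotSystem (Y := Y) e) : B.base ⟶ Y p.1.1.1 := p.2.choose

theorem quotSystem.lift_mem (p : quotSystem (Y := Y) e) :
    (⟨_, quotSystem.lift e p⟩ : MorFrom B.base) ∈ B.filt.carrier :=
  p.2.choose_spec.1

theorem quotSystem.fac (p : quotSystem (Y := Y) e) :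
    (Kforget D).map e ≫ quotSystem.lift e p = p.1.1.2 :=
  p.2.choose_spec.2

variable [Epi e]

noncomputable def quotSystem.comparison :
    InducedCategory (FiltCat A.filt) (fun p : quotSystem (Y := Y) e => p.1.toFiltCat) ⥤
      FiltCat B.filt where
  obj p := ⟨_, quotSystem.lift_mem e p⟩
  map {p q} σ := ⟨σ.hom.1, KObj.eq_of_epi_of_mem e (B.filt.comp_mem (quotSystem.lift_mem e p) _)
    (quotSystem.lift_mem e q)
    (((reassoc_of% (quotSystem.fac e p)) σ.hom.1).trans (σ.hom.2.trans (quotSystem.fac e q).symm))⟩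

instance : (quotSystem.comparison (Y := Y) e).Faithful where
  map_injective h := by
    have := congrArg Subtype.val h
    exact InducedCategory.hom_ext (Subtype.ext this)

instance : (quotSystem.comparison (Y := Y) e).Full where
  map_surjective {p q} g := ⟨InducedCategory.homMk ⟨g.1, by
    change p.1.1.2 ≫ g.1 = q.1.1.2
    rw [← quotSystem.fac e p, ← quotSystem.fac e q]
    exact (Category.assoc _ _ _).trans (congrArg ((Kforget D).map e ≫ ·) g.2)⟩, rfl⟩

/-- The initiality of the comparison functor expresses that `B` is recovered from the small
quotients of `A` that factor through `e`. -/
theorem quotSystem.initial_comparison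
    (hY : ∀ ⦃Z : D⦄ (f : A.base ⟶ Z), ExtremalEpi f → ∃ i, Nonempty (Y i ≅ Z))
    (he : ∀ ρ ∈ B.filt.carrier, ExtremalEpi ρ.2 → ExtremalEpi ((Kforget D).map e ≫ ρ.2)) :
    (quotSystem.comparison (Y := Y) e).Initial := by
  have := B.reduced.isCofiltered
  refine Functor.initial_of_exists_of_isCofiltered_of_fullyFaithful _ fun δ => ?_
  obtain ⟨ρ, hρ, hρe, k, hk⟩ := B.reduced _ δ.2
  obtain ⟨i, ⟨φ⟩⟩ := hY _ (he ρ hρ hρe)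
  have hmem : (⟨Y i, (Kforget D).map e ≫ ρ.2 ≫ φ.inv⟩ : MorFrom A.base) ∈ A.filt.carrier := by
    have := A.filt.comp_mem (KObj.map_mem e hρ) φ.inv
    rwa [Category.assoc] at this
  let p : quotSystem (Y := Y) e := ⟨⟨⟨i, _⟩, hmem⟩, ρ.2 ≫ φ.inv, B.filt.comp_mem hρ _, rfl⟩
  have hlift : quotSystem.lift e p = ρ.2 ≫ φ.inv :=
    KObj.eq_of_epi_of_mem e (quotSystem.lift_mem e p) (B.filt.comp_mem hρ _) (quotSystem.fac e p)
  exact ⟨p, ⟨⟨φ.hom ≫ k, (congrArg (· ≫ φ.hom ≫ k) hlift).trans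
    ((by simp : (ρ.2 ≫ φ.inv) ≫ φ.hom ≫ k = ρ.2 ≫ k).trans hk)⟩⟩⟩

end Quotients

section QuotientObjects

variable [HasLimits D] (hEM : EMCat D) {A : KObj D} {ι : Type v} {Y : ι → D}

abbrev quotDiagram (S : Set (SmallElem A Y)) :
    InducedCategory (FiltCat A.filt) (fun p : S => p.1.toFiltCat) ⥤ KObj D :=
  inducedFunctor _ ⋙ FiltDiagram A.filt ⋙ kDiscrete D

noncomputable def quotObj (S : Set (SmallElem A Y)) : KObj D :=
  limitObj hEM (G := quotDiagram S) (limit.isLimit (inducedFunctor _ ⋙ FiltDiagram A.filt))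

noncomputable def quotMap (S : Set (SmallElem A Y)) : A ⟶ quotObj hEM S :=
  (isLimitLimitCone hEM (G := quotDiagram S)
    (limit.isLimit (inducedFunctor _ ⋙ FiltDiagram A.filt))).lift
      ((KObj.discCone A).whisker (inducedFunctor _))

theorem exists_iso_quotObj {B : KObj D} (e : A ⟶ B) (he : ExtremalEpi e)
    (hY : ∀ ⦃Z : D⦄ (f : A.base ⟶ Z), ExtremalEpi f → ∃ i, Nonempty (Y i ≅ Z)) :
    ∃ Φ : B ≅ quotObj hEM (quotSystem (Y := Y) e), e ≫ Φ.hom = quotMap hEM _ := by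
  have := he.1
  have := quotSystem.initial_comparison e hY fun ρ hρ hρe => he.map_comp_mem hEM hρ hρe
  let hL := isLimitLimitCone hEM (G := quotDiagram (quotSystem (Y := Y) e))
    (limit.isLimit (inducedFunctor _ ⋙ FiltDiagram A.filt))
  let Φ : B ⟶ quotObj hEM (quotSystem e) :=
    hL.lift ((KObj.discCone B).whisker (quotSystem.comparison e))
  have hΦ (p) : (Kforget D).map Φ ≫ limit.π _ p = quotSystem.lift e p := (limit.isLimit _).fac _ p
  have : IsIso ((Kforget D).map Φ) := IsLimit.isIso_lift (limit.isLimit _)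
    ((Functor.Initial.isLimitWhiskerEquiv (quotSystem.comparison e) _).symm B.isLimit)
  have : IsIso Φ := KObj.isIso_of_isIso_map Φ fun δ hδ => by
    let g := Functor.Initial.homToLift (quotSystem.comparison (Y := Y) e) ⟨δ, hδ⟩
    have h : inv ((Kforget D).map Φ) ≫ δ.2 = limit.π _ _ ≫ g.1 :=
      (IsIso.inv_comp_eq _).2 (g.2.symm.trans
        ((Category.assoc _ _ _).symm.trans (congrArg (· ≫ g.1) (hΦ _))).symm)
    rw [h]
    exact mem_limitFilt hEM (G := quotDiagram _) _ _ (ξ := ⟨_, g.1⟩) trivial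
  have hfac : e ≫ Φ = quotMap hEM _ := hL.hom_ext fun p =>
    (Category.assoc _ _ _).trans ((congrArg (e ≫ ·) (hL.fac _ p)).trans
      ((KObj.hom_ext (f := e ≫ kToDiscrete _ (quotSystem.lift_mem e p))
        (g := kToDiscrete _ p.1.2) (quotSystem.fac e p)).trans
          (hL.fac ((KObj.discCone A).whisker (inducedFunctor _)) p).symm))
  exact ⟨asIso Φ, hfac⟩

theorem ecwp_kObj (hEM : EMCat D) (hD : ECWP D) : ECWP (KObj D) := by
  intro A
  obtain ⟨ι, Y, _, _, hcov⟩ := hD A.base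
  have : HasPullbacks (KObj D) := KObj.hasLimitsOfShape hEM
  refine ⟨{S : Set (SmallElem A Y) // ExtremalEpi (quotMap hEM S)}, fun S => quotObj hEM S.1,
    fun S => quotMap hEM S.1, fun S => S.2, fun B e he => ?_⟩
  obtain ⟨Φ, hΦ⟩ := exists_iso_quotObj hEM e he fun _ f hf =>
    let ⟨i, φ, _⟩ := hcov f hf
    ⟨i, ⟨φ⟩⟩
  refine ⟨⟨quotSystem e, ?_⟩, Φ.symm, ?_⟩
  · rw [← hΦ]
    exact he.comp (.of_strongEpi Φ.hom)
  · change quotMap hEM _ ≫ Φ.inv = e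
    rw [← hΦ, Category.assoc, Iso.hom_inv_id, Category.comp_id]

end QuotientObjects

/-- `KD` is an (extremal epi, mono) category. -/
theorem kobj_em_category [Limits.HasLimits D] [Limits.HasColimits D]
    (hecwp : ECWP D) (hEM : EMCat D) :
    EMCat (KObj D) := by
  have : HasPullbacks (KObj D) := KObj.hasLimitsOfShape hEM
  have : HasWidePushouts.{v} (KObj D) := fun _ => KObj.hasColimitsOfShape hEM hecwp
  have : HasCoequalizers (KObj D) := KObj.hasColimitsOfShape hEM hecwp
  exact emCat_of_ecwp (ecwp_kObj hEM hecwp)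

end FilteredCats
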